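/- If the nonlinear weights satisfy ω_k = γ_k + O(h) (i.e., |ω_k − γ_k| ≤ C·h) and each p_m approximates a smooth function with |p_m(x) − u(x)| ≤ C·h² for m = 2,...,5 while |p_1(x) − u(x)| ≤ C·h⁵, then the WENO combination ω_1((1/γ_1)p_1 − ∑_{m=2}^{5}(γ_m/γ_1)p_m) + ∑_{m=2}^{5} ω_m p_m approximates u(x) with error O(h³), i.e., bounded by C'·h³ for some constant C' depending only on C, the γ_k, and bounds on u. -/
import Mathlib


open Finset in
/-- If ω_k = γ_k + O(h), the small-stencil polynomials are O(h²) accurate and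
the big-stencil polynomial is O(h⁵) accurate, then the WENO combination is
O(h³) accurate, with a constant depending only on C, the γ_k, and the bound B. -/
theorem stmt5 (C B : ℝ) (hC : 0 ≤ C) (hB : 0 ≤ B) (γ : Fin 5 → ℝ)
    (hγ : ∀ k, 0 < γ k) (hγsum : ∑ k, γ k = 1) :
    ∃ C' > 0, ∀ (u : ℝ × ℝ → ℝ) (p : Fin 5 → ℝ × ℝ → ℝ) (ω : Fin 5 → ℝ)
      (x : ℝ × ℝ) (h : ℝ), 0 < h → h ≤ 1 →
      (∀ k, |ω k - γ k| ≤ C * h) → (∑ k, ω k = 1) →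
      |p 0 x - u x| ≤ C * h ^ 5 →
      (∀ m ∈ ({1, 2, 3, 4} : Finset (Fin 5)), |p m x - u x| ≤ C * h ^ 2) →
      (∀ m, |p m x| ≤ B) → |u x| ≤ B →
      |ω 0 * ((1 / γ 0) * p 0 x
          - ∑ m ∈ ({1, 2, 3, 4} : Finset (Fin 5)), (γ m / γ 0) * p m x)
        + ∑ m ∈ ({1, 2, 3, 4} : Finset (Fin 5)), ω m * p m x
        - u x| ≤ C' * h ^ 3 := by
  have hγ0 := hγ 0
  refine ⟨((γ 0 + C) * C + 4 * (γ 0 + 1) * C ^ 2) / γ 0 + 1, by positivity, ?_⟩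
  intro u p ω x h hh hh1 hω hωsum h0 hm hpB huB
  have e1 := hm 1 (by decide)
  have e2 := hm 2 (by decide)
  have e3 := hm 3 (by decide)
  have e4 := hm 4 (by decide)
  have d0 := hω 0
  rw [Fin.sum_univ_five] at hγsum hωsum
  have hsum : ∀ f : Fin 5 → ℝ, ∑ m ∈ ({1, 2, 3, 4} : Finset (Fin 5)), f m
      = f 1 + f 2 + f 3 + f 4 := by
    intro f
    rw [show ({1, 2, 3, 4} : Finset (Fin 5)) = insert 1 (insert 2 (insert 3 {4})) from rfl,
      Finset.sum_insert (by decide), Finset.sum_insert (by decide),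
      Finset.sum_insert (by decide), Finset.sum_singleton]
    ring
  rw [hsum, hsum]
  have key : ω 0 * ((1 / γ 0) * p 0 x
          - ((γ 1 / γ 0) * p 1 x + (γ 2 / γ 0) * p 2 x + (γ 3 / γ 0) * p 3 x
            + (γ 4 / γ 0) * p 4 x))
        + (ω 1 * p 1 x + ω 2 * p 2 x + ω 3 * p 3 x + ω 4 * p 4 x) - u x
      = (ω 0 * (p 0 x - u x)
          + (γ 0 * (ω 1 - γ 1) - γ 1 * (ω 0 - γ 0)) * (p 1 x - u x)
          + (γ 0 * (ω 2 - γ 2) - γ 2 * (ω 0 - γ 0)) * (p 2 x - u x)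
          + (γ 0 * (ω 3 - γ 3) - γ 3 * (ω 0 - γ 0)) * (p 3 x - u x)
          + (γ 0 * (ω 4 - γ 4) - γ 4 * (ω 0 - γ 0)) * (p 4 x - u x)) / γ 0 := by
    field_simp
    linear_combination (γ 0 * u x) * hωsum - (ω 0 * u x) * hγsum
  have h53 : h ^ 5 ≤ h ^ 3 := pow_le_pow_of_le_one hh.le hh1 (by norm_num)
  have step : ∀ (gm wm pm : ℝ), |wm - gm| ≤ C * h → 0 < gm → gm ≤ 1 →
      |pm - u x| ≤ C * h ^ 2 →
      |(γ 0 * (wm - gm) - gm * (ω 0 - γ 0)) * (pm - u x)|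
        ≤ (γ 0 + 1) * C ^ 2 * h ^ 3 := by
    intro gm wm pm hd hgm hgm1 he
    rw [abs_mul]
    have t1 : |γ 0 * (wm - gm)| ≤ γ 0 * (C * h) := by
      rw [abs_mul, abs_of_pos hγ0]
      exact mul_le_mul_of_nonneg_left hd hγ0.le
    have t2 : |gm * (ω 0 - γ 0)| ≤ 1 * (C * h) := by
      rw [abs_mul]
      exact mul_le_mul (by rw [abs_of_pos hgm]; exact hgm1) d0 (abs_nonneg _) zero_le_one
    have h1 : |γ 0 * (wm - gm) - gm * (ω 0 - γ 0)| ≤ (γ 0 + 1) * (C * h) := by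
      have := abs_sub (γ 0 * (wm - gm)) (gm * (ω 0 - γ 0))
      nlinarith
    calc |γ 0 * (wm - gm) - gm * (ω 0 - γ 0)| * |pm - u x|
        ≤ ((γ 0 + 1) * (C * h)) * (C * h ^ 2) :=
          mul_le_mul h1 he (abs_nonneg _) (by positivity)
      _ = (γ 0 + 1) * C ^ 2 * h ^ 3 := by ring
  have hγle : ∀ k : Fin 5, γ k ≤ 1 := by
    intro k
    fin_cases k <;> simp <;> linarith [hγ 0, hγ 1, hγ 2, hγ 3, hγ 4]
  have b0 : |ω 0 * (p 0 x - u x)| ≤ (γ 0 + C) * C * h ^ 3 := by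
    rw [abs_mul]
    have hw0 : |ω 0| ≤ γ 0 + C := by
      have := abs_sub_abs_le_abs_sub (ω 0) (γ 0)
      rw [abs_of_pos hγ0] at this
      have hch : C * h ≤ C := by nlinarith
      linarith
    calc |ω 0| * |p 0 x - u x| ≤ (γ 0 + C) * (C * h ^ 5) :=
          mul_le_mul hw0 h0 (abs_nonneg _) (by positivity)
      _ ≤ (γ 0 + C) * (C * h ^ 3) := by gcongr
      _ = (γ 0 + C) * C * h ^ 3 := by ring
  have b1 := step (γ 1) (ω 1) (p 1 x) (hω 1) (hγ 1) (hγle 1) e1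
  have b2 := step (γ 2) (ω 2) (p 2 x) (hω 2) (hγ 2) (hγle 2) e2
  have b3 := step (γ 3) (ω 3) (p 3 x) (hω 3) (hγ 3) (hγle 3) e3
  have b4 := step (γ 4) (ω 4) (p 4 x) (hω 4) (hγ 4) (hγle 4) e4
  set t0 := ω 0 * (p 0 x - u x)
  set t1 := (γ 0 * (ω 1 - γ 1) - γ 1 * (ω 0 - γ 0)) * (p 1 x - u x)
  set t2 := (γ 0 * (ω 2 - γ 2) - γ 2 * (ω 0 - γ 0)) * (p 2 x - u x)
  set t3 := (γ 0 * (ω 3 - γ 3) - γ 3 * (ω 0 - γ 0)) * (p 3 x - u x)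
  set t4 := (γ 0 * (ω 4 - γ 4) - γ 4 * (ω 0 - γ 0)) * (p 4 x - u x)
  have hnum : |t0 + t1 + t2 + t3 + t4|
      ≤ ((γ 0 + C) * C + 4 * (γ 0 + 1) * C ^ 2) * h ^ 3 := by
    have A1 := abs_add_le (t0 + t1 + t2 + t3) t4
    have A2 := abs_add_le (t0 + t1 + t2) t3
    have A3 := abs_add_le (t0 + t1) t2
    have A4 := abs_add_le t0 t1
    linarith
  rw [key, abs_div, abs_of_pos hγ0, div_le_iff₀ hγ0]
  have hfin : (((γ 0 + C) * C + 4 * (γ 0 + 1) * C ^ 2) / γ 0 + 1) * h ^ 3 * γ 0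
      = ((γ 0 + C) * C + 4 * (γ 0 + 1) * C ^ 2) * h ^ 3 + γ 0 * h ^ 3 := by
    field_simp
  rw [hfin]
  linarith [mul_pos hγ0 (pow_pos hh 3)]
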